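/- arXiv:2509.18389 — 4 statements merged into one kernel-verified Lean document; each statement's English description precedes it below -/
import Mathlib

section
/- For every L ≥ 0 and every query index j ∈ {1,…,n}, the L-layer Transformer output with the TD parameters on the enumerated prompt equals the j-th entry of the L-th TD iterate: TF_L(Z_0(j); θ_L^TD) = ⟨e_j, w_L⟩. -/
open Matrix Filter Topology

noncomputable section

/-- Index type for `2n` rows (two stacked copies of the feature dimension). -/
abbrev TwoN (n : ℕ) := Fin n ⊕ Fin n
/-- Row index type for prompts: `2n + 1`. -/
abbrev RIdx (n : ℕ) := TwoN n ⊕ Unit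
/-- Column index type for prompts: `n + 1` (context columns plus the query column). -/
abbrev CIdx (n : ℕ) := Fin n ⊕ Unit

/-- The mask `M = [[I_n, 0],[0, 0]]`. -/
def maskM (n : ℕ) : Matrix (CIdx n) (CIdx n) ℝ := Matrix.fromBlocks 1 0 0 0

/-- One linear attention layer `Z ↦ Z + P̃ Z M (Zᵀ Q̃ Z)`. -/
def attnLayer (n : ℕ) (Pm Qm : Matrix (RIdx n) (RIdx n) ℝ)
    (Z : Matrix (RIdx n) (CIdx n) ℝ) : Matrix (RIdx n) (CIdx n) ℝ :=
  Z + Pm * Z * maskM n * (Zᵀ * Qm * Z)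

/-- `P̃ = [[0, 0],[u, 1]]`. -/
def Pmat (n : ℕ) (u : Matrix Unit (TwoN n) ℝ) : Matrix (RIdx n) (RIdx n) ℝ :=
  Matrix.fromBlocks 0 0 u 1

/-- `Q̃ = [[A, 0],[0, 0]]`. -/
def Qmat (n : ℕ) (A : Matrix (TwoN n) (TwoN n) ℝ) : Matrix (RIdx n) (RIdx n) ℝ :=
  Matrix.fromBlocks A 0 0 0

/-- `A^TD = [[-I, I],[0, 0]]`. -/
def Atd (n : ℕ) : Matrix (TwoN n) (TwoN n) ℝ := Matrix.fromBlocks (-1) 1 0 0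

/-- A row-stochastic matrix. -/
def RowStochastic {n : ℕ} (P : Matrix (Fin n) (Fin n) ℝ) : Prop :=
  (∀ i k, 0 ≤ P i k) ∧ ∀ i, ∑ k, P i k = 1

/-- TD iterates `w_0 = 0`, `w_{l+1} = r + γ P w_l`. -/
def tdW {n : ℕ} (γ : ℝ) (P : Matrix (Fin n) (Fin n) ℝ) (r : Fin n → ℝ) : ℕ → Fin n → ℝ
  | 0 => 0
  | l + 1 => r + γ • P.mulVec (tdW γ P r l)

/-- The value vector `v = (I - γ P)⁻¹ r`. -/
def valueV {n : ℕ} (γ : ℝ) (P : Matrix (Fin n) (Fin n) ℝ) (r : Fin n → ℝ) : Fin n → ℝ :=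
  ((1 : Matrix (Fin n) (Fin n) ℝ) - γ • P)⁻¹.mulVec r

/-- The prompt `Z_0(j)`: the `i`-th column is `(e_i, γ Pᵀ e_i, r_i)` and the query
column is `(e_j, 0, 0)`. -/
def prompt {n : ℕ} (γ : ℝ) (P : Matrix (Fin n) (Fin n) ℝ) (r : Fin n → ℝ) (j : Fin n) :
    Matrix (RIdx n) (CIdx n) ℝ := fun p q =>
  match p, q with
  | Sum.inl (Sum.inl k), Sum.inl i => if k = i then 1 else 0
  | Sum.inl (Sum.inr k), Sum.inl i => γ * P i k
  | Sum.inr _, Sum.inl i => r i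
  | Sum.inl (Sum.inl k), Sum.inr _ => if k = j then 1 else 0
  | Sum.inl (Sum.inr _), Sum.inr _ => 0
  | Sum.inr _, Sum.inr _ => 0

/-- Embeddings `Z_l` of the looped transformer with shared parameters `(A, u)`,
starting from the prompt `Z_0(j)`. -/
def embed {n : ℕ} (γ : ℝ) (P : Matrix (Fin n) (Fin n) ℝ) (r : Fin n → ℝ) (j : Fin n)
    (A : Matrix (TwoN n) (TwoN n) ℝ) (u : Matrix Unit (TwoN n) ℝ) :
    ℕ → Matrix (RIdx n) (CIdx n) ℝ
  | 0 => prompt γ P r j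
  | l + 1 => attnLayer n (Pmat n u) (Qmat n A) (embed γ P r j A u l)

/-- Looped `L`-layer transformer output `F_L^{(j)}(A, u) = -(Z_L)_{2n+1, n+1}`. -/
def tfOut {n : ℕ} (γ : ℝ) (P : Matrix (Fin n) (Fin n) ℝ) (r : Fin n → ℝ) (j : Fin n)
    (A : Matrix (TwoN n) (TwoN n) ℝ) (u : Matrix Unit (TwoN n) ℝ) (L : ℕ) : ℝ :=
  -(embed γ P r j A u L (Sum.inr ()) (Sum.inr ()))

/-- `TF_L(Z_0(j); θ_L^TD)`: the transformer output with the TD parameters. -/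
def tfTD {n : ℕ} (γ : ℝ) (P : Matrix (Fin n) (Fin n) ℝ) (r : Fin n → ℝ) (j : Fin n) (L : ℕ) : ℝ :=
  tfOut γ P r j (Atd n) 0 L

/-- `X ∈ ℝ^{2n×n}`: the `i`-th column is `(e_i, γ Pᵀ e_i)`. -/
def Xmat {n : ℕ} (γ : ℝ) (P : Matrix (Fin n) (Fin n) ℝ) : Matrix (TwoN n) (Fin n) ℝ :=
  fun p i => match p with
  | Sum.inl k => if k = i then 1 else 0
  | Sum.inr k => γ * P i k

/-- The query vector `x^q = (e_ω, 0) ∈ ℝ^{2n}`. -/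
def xqv {n : ℕ} (ω : Fin n) : TwoN n → ℝ := fun p =>
  match p with
  | Sum.inl k => if k = ω then 1 else 0
  | Sum.inr _ => 0

/-- Operator norm induced by the ℓ1 vector norm: maximum absolute column sum. -/
def matL1 {m k : Type*} [Fintype m] [Fintype k] (B : Matrix m k ℝ) : ℝ :=
  ⨆ j, ∑ i, |B i j|

/-- `G_0^{(i)} = 0`, `G_{l+1}^{(i)} = X (r - w_l) (X e_i)ᵀ + γ Σ_j P_{ij} G_l^{(j)}`. -/
def Gseq {n : ℕ} (γ : ℝ) (P : Matrix (Fin n) (Fin n) ℝ) (r : Fin n → ℝ) :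
    ℕ → Fin n → Matrix (TwoN n) (TwoN n) ℝ
  | 0 => fun _ => 0
  | l + 1 => fun i =>
      Matrix.vecMulVec ((Xmat γ P).mulVec (r - tdW γ P r l)) ((Xmat γ P).mulVec (Pi.single i 1))
        + γ • ∑ j, P i j • Gseq γ P r l j

/-- `H_0 = 0`, `H_{l+1} = H_l + X (r - w_l) (x^q)ᵀ - G_l^{(ω)}`. -/
def Hseq {n : ℕ} (γ : ℝ) (P : Matrix (Fin n) (Fin n) ℝ) (r : Fin n → ℝ) (ω : Fin n) :
    ℕ → Matrix (TwoN n) (TwoN n) ℝ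
  | 0 => 0
  | l + 1 => Hseq γ P r ω l
      + Matrix.vecMulVec ((Xmat γ P).mulVec (r - tdW γ P r l)) (xqv ω)
      - Gseq γ P r l ω

/-- `U_0 = 0`, `U_{l+1} = X Xᵀ A^TD X + γ U_l Pᵀ`. -/
def Useq {n : ℕ} (γ : ℝ) (P : Matrix (Fin n) (Fin n) ℝ) : ℕ → Matrix (TwoN n) (Fin n) ℝ
  | 0 => 0
  | l + 1 => Xmat γ P * (Xmat γ P)ᵀ * Atd n * Xmat γ P + γ • (Useq γ P l * Pᵀ)

/-- `h_0 = 0`, `h_{l+1} = h_l + X Xᵀ A^TD x^q + U_l Xᵀ A^TD x^q`. -/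
def hseq {n : ℕ} (γ : ℝ) (P : Matrix (Fin n) (Fin n) ℝ) (ω : Fin n) : ℕ → TwoN n → ℝ
  | 0 => 0
  | l + 1 => hseq γ P ω l
      + (Xmat γ P * (Xmat γ P)ᵀ * Atd n).mulVec (xqv ω)
      + (Useq γ P l * (Xmat γ P)ᵀ * Atd n).mulVec (xqv ω)

/-- `g_L(j)`: the vector of all partial derivatives of `F_L^{(j)}` with respect to the
entries of `A` and of `u`, evaluated at the TD parameters `(A^TD, 0)`. -/
def gvec {n : ℕ} (γ : ℝ) (P : Matrix (Fin n) (Fin n) ℝ) (r : Fin n → ℝ) (L : ℕ) (j : Fin n) :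
    (TwoN n × TwoN n) ⊕ TwoN n → ℝ
  | Sum.inl ab => deriv (fun t : ℝ =>
      tfOut γ P r j (Atd n + t • Matrix.single ab.1 ab.2 1) 0 L) 0
  | Sum.inr k => deriv (fun t : ℝ =>
      tfOut γ P r j (Atd n) (t • Matrix.single () k 1) L) 0


/-!
With the TD parameters only the bottom row of the prompt moves: the block `(X | x_q)` above it
stays fixed, and one layer maps the context part `b` of the bottom row to
`b + b XᵀA^TD X = (γ P b)ᵀ` and its query entry `c` to `c + b XᵀA^TD x_q = c - b_j`.
By induction the bottom row of `Z_l` is `(w_{l+1} - w_l, -w_l(j))`, the increment form of the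
TD recursion.
-/

namespace TDTransformer

variable {n : ℕ}

theorem tdW_succ_succ_sub (γ : ℝ) (P : Matrix (Fin n) (Fin n) ℝ) (r : Fin n → ℝ) (l : ℕ) :
    tdW γ P r (l + 2) - tdW γ P r (l + 1) = γ • P *ᵥ (tdW γ P r (l + 1) - tdW γ P r l) := by
  simp only [tdW, mulVec_sub, smul_sub]
  abel

theorem prompt_eq_fromBlocks (γ : ℝ) (P : Matrix (Fin n) (Fin n) ℝ) (r : Fin n → ℝ)
    (j : Fin n) :
    prompt γ P r j =
      fromBlocks (Xmat γ P) (replicateCol Unit (xqv j)) (replicateRow Unit r) 0 := by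
  ext (((k | k) | _) | _) (i | _) <;> rfl

theorem attnLayer_Pmat_zero_fromBlocks (A : Matrix (TwoN n) (TwoN n) ℝ)
    (X : Matrix (TwoN n) (Fin n) ℝ) (x : Matrix (TwoN n) Unit ℝ) (b : Matrix Unit (Fin n) ℝ)
    (c : Matrix Unit Unit ℝ) :
    attnLayer n (Pmat n 0) (Qmat n A) (fromBlocks X x b c) =
      fromBlocks X x (b + b * (Xᵀ * A * X)) (c + b * (Xᵀ * A * x)) := by
  simp only [attnLayer, Pmat, Qmat, maskM, fromBlocks_transpose, fromBlocks_multiply,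
    Matrix.zero_mul, Matrix.mul_zero, Matrix.mul_one, Matrix.one_mul, zero_add, add_zero,
    fromBlocks_add]

theorem Xmat_transpose_mul_Atd_mul_Xmat (γ : ℝ) (P : Matrix (Fin n) (Fin n) ℝ) :
    (Xmat γ P)ᵀ * Atd n * Xmat γ P = γ • Pᵀ - 1 := by
  ext k i
  simp [Atd, Xmat, Matrix.mul_apply, Matrix.one_apply, Fintype.sum_sum_type, eq_comm,
    sub_eq_neg_add]

theorem Xmat_transpose_mul_Atd_mulVec_xqv (γ : ℝ) (P : Matrix (Fin n) (Fin n) ℝ) (j : Fin n) :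
    ((Xmat γ P)ᵀ * Atd n) *ᵥ xqv j = -Pi.single j 1 := by
  ext k
  simp [Atd, Xmat, xqv, mulVec, dotProduct, Matrix.mul_apply, Fintype.sum_sum_type,
    Pi.single_apply, Matrix.one_apply]

theorem embed_Atd_zero_eq_fromBlocks (γ : ℝ) (P : Matrix (Fin n) (Fin n) ℝ) (r : Fin n → ℝ)
    (j : Fin n) (l : ℕ) :
    embed γ P r j (Atd n) 0 l =
      fromBlocks (Xmat γ P) (replicateCol Unit (xqv j))
        (replicateRow Unit (tdW γ P r (l + 1) - tdW γ P r l)) (of fun _ _ => -tdW γ P r l j) := by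
  induction l with
  | zero =>
    rw [embed, prompt_eq_fromBlocks]
    congr
    · simp [tdW]
    · ext; simp [tdW]
  | succ l ih =>
    rw [embed, ih, attnLayer_Pmat_zero_fromBlocks, Xmat_transpose_mul_Atd_mul_Xmat,
      ← replicateCol_mulVec, Xmat_transpose_mul_Atd_mulVec_xqv,
      replicateRow_mul_replicateCol, ← replicateRow_vecMul, ← replicateRow_add,
      tdW_succ_succ_sub]
    congr 2
    · rw [vecMul_sub, vecMul_smul, vecMul_transpose, vecMul_one]
      abel
    · ext
      simp only [Matrix.add_apply, of_apply, dotProduct_neg, dotProduct_single, mul_one,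
        Pi.sub_apply]
      ring

end TDTransformer

theorem stmt1_general (n : ℕ) (γ : ℝ) (P : Matrix (Fin n) (Fin n) ℝ) (r : Fin n → ℝ)
    (L : ℕ) (j : Fin n) :
    tfTD γ P r j L = tdW γ P r L j := by
  simp [tfTD, tfOut, TDTransformer.embed_Atd_zero_eq_fromBlocks]

/-- the L-layer transformer output with TD parameters equals the
j-th entry of the L-th TD iterate. -/
theorem stmt1 (n : ℕ) (hn : 1 ≤ n) (γ : ℝ) (hγ0 : 0 ≤ γ) (hγ1 : γ < 1)
    (P : Matrix (Fin n) (Fin n) ℝ) (hP : RowStochastic P) (r : Fin n → ℝ)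
    (L : ℕ) (j : Fin n) :
    tfTD γ P r j L = tdW γ P r L j :=
  stmt1_general n γ P r L j

end
end

section
/- (Theorem 1, inference-time convergence) For every query index j ∈ {1,…,n}, the depth-L Transformer output with the TD parameters converges to the true value of the query state: lim_{L→∞} TF_L(Z_0(j); θ_L^TD) = v_j, the j-th entry of the value vector v = (I_n − γP)^{-1} r. -/
/-!
With the TD parameters (`u = 0`, `A = A^TD`) a layer only changes the bottom row of the
embedding. Writing `X` for the top `2n` rows of the context columns, `Xᵀ A^TD X = γ Pᵀ - I` and
`Xᵀ A^TD x^q = -e_j`, so the bottom row of the context columns evolves as `rᵀ (γ Pᵀ)^l` while the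
query entry loses its `j`-th coordinate at each layer. Hence `TF_L = (∑_{l<L} (γ P)^l r)_j`, the
`L`-th TD iterate, and this Neumann series converges to `((I - γ P)⁻¹ r)_j` because the
`ℓ∞`-operator norm of `γ P` is at most `γ < 1`.
-/

open Matrix Filter Topology

noncomputable section

section

variable {n : ℕ}

theorem attnLayer_fromBlocks (A : Matrix (TwoN n) (TwoN n) ℝ) (X : Matrix (TwoN n) (Fin n) ℝ)
    (e : Matrix (TwoN n) Unit ℝ) (b : Matrix Unit (Fin n) ℝ) (c : Matrix Unit Unit ℝ) :
    attnLayer n (Pmat n 0) (Qmat n A) (fromBlocks X e b c) =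
      fromBlocks X e (b + b * (Xᵀ * A * X)) (c + b * (Xᵀ * A * e)) := by
  simp only [attnLayer, Pmat, Qmat, maskM, fromBlocks_transpose, fromBlocks_multiply,
    fromBlocks_add, Matrix.zero_mul, Matrix.mul_zero, Matrix.one_mul, Matrix.mul_one,
    add_zero, zero_add, Matrix.mul_assoc]

def queryCol (j : Fin n) : Matrix (TwoN n) Unit ℝ :=
  fromRows (replicateCol Unit (Pi.single j 1)) 0

theorem Xmat_eq_fromRows (γ : ℝ) (P : Matrix (Fin n) (Fin n) ℝ) :
    Xmat γ P = fromRows 1 (γ • Pᵀ) := by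
  ext (k | k) i <;> simp [Xmat, one_apply]

theorem prompt_eq_fromBlocks (γ : ℝ) (P : Matrix (Fin n) (Fin n) ℝ) (r : Fin n → ℝ) (j : Fin n) :
    prompt γ P r j = fromBlocks (Xmat γ P) (queryCol j) (replicateRow Unit r) 0 := by
  ext p q
  rcases p with (k | k) | _ <;> rcases q with i | _ <;>
    simp [prompt, Xmat, queryCol, Pi.single_apply]

theorem Xmat_transpose_mul_Atd (γ : ℝ) (P : Matrix (Fin n) (Fin n) ℝ) :
    (Xmat γ P)ᵀ * Atd n = fromCols (-1) 1 := by
  have := fromCols_mul_fromBlocks (1 : Matrix (Fin n) (Fin n) ℝ) (γ • P)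
    (-1 : Matrix (Fin n) (Fin n) ℝ) (1 : Matrix (Fin n) (Fin n) ℝ) 0 0
  simpa [Xmat_eq_fromRows, Atd, transpose_fromRows] using this

theorem Xmat_transpose_mul_Atd_mul_Xmat (γ : ℝ) (P : Matrix (Fin n) (Fin n) ℝ) :
    (Xmat γ P)ᵀ * Atd n * Xmat γ P = γ • Pᵀ - 1 := by
  rw [Xmat_transpose_mul_Atd, Xmat_eq_fromRows, fromCols_mul_fromRows]
  simp [neg_add_eq_sub]

theorem Xmat_transpose_mul_Atd_mul_queryCol (γ : ℝ) (P : Matrix (Fin n) (Fin n) ℝ) (j : Fin n) :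
    (Xmat γ P)ᵀ * Atd n * queryCol j = -replicateCol Unit (Pi.single j 1) := by
  rw [Xmat_transpose_mul_Atd, queryCol, fromCols_mul_fromRows]
  simp

theorem embed_Atd_zero (γ : ℝ) (P : Matrix (Fin n) (Fin n) ℝ) (r : Fin n → ℝ) (j : Fin n)
    (L : ℕ) :
    embed γ P r j (Atd n) 0 L = fromBlocks (Xmat γ P) (queryCol j)
      (replicateRow Unit ((γ • P) ^ L *ᵥ r))
      (of fun _ _ => -((∑ k ∈ Finset.range L, (γ • P) ^ k) *ᵥ r) j) := by
  induction L with
  | zero =>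
    rw [embed, prompt_eq_fromBlocks]
    congr
    · simp
    · ext; simp
  | succ L ih =>
    rw [embed, ih, attnLayer_fromBlocks, Xmat_transpose_mul_Atd_mul_Xmat,
      Xmat_transpose_mul_Atd_mul_queryCol]
    congr 1
    · have hrow (v : Fin n → ℝ) (M : Matrix (Fin n) (Fin n) ℝ) :
          replicateRow Unit v * M = replicateRow Unit (v ᵥ* M) := rfl
      rw [Matrix.mul_sub, Matrix.mul_one, add_sub_cancel, ← transpose_smul, hrow,
        vecMul_transpose, mulVec_mulVec, ← pow_succ']
    · ext
      simp [Finset.sum_range_succ, add_mulVec, replicateRow_mul_replicateCol]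
      ring

theorem tfTD_eq_sum_pow_mulVec (γ : ℝ) (P : Matrix (Fin n) (Fin n) ℝ) (r : Fin n → ℝ)
    (j : Fin n) (L : ℕ) : tfTD γ P r j L = ((∑ k ∈ Finset.range L, (γ • P) ^ k) *ᵥ r) j := by
  simp [tfTD, tfOut, embed_Atd_zero]

end

section LinftyOpNorm

attribute [local instance] Matrix.linftyOpNormedRing Matrix.linftyOpNormedAlgebra

theorem RowStochastic.linfty_opNorm_le_one {n : ℕ} {P : Matrix (Fin n) (Fin n) ℝ}
    (hP : RowStochastic P) : ‖P‖ ≤ 1 := by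
  have hrow (i : Fin n) : ∑ k, ‖P i k‖₊ = 1 := by
    ext
    simpa [Real.norm_eq_abs, abs_of_nonneg (hP.1 i _)] using hP.2 i
  rw [linfty_opNorm_def, NNReal.coe_le_one]
  exact Finset.sup_le fun i _ => (hrow i).le

theorem Matrix.hasSum_pow_of_linfty_opNorm_lt_one {𝕜 m : Type*} [RCLike 𝕜] [Fintype m]
    [DecidableEq m] {x : Matrix m m 𝕜} (hx : ‖x‖ < 1) :
    HasSum (fun k => x ^ k) (1 - x)⁻¹ := by
  rw [inv_eq_right_inv (mul_neg_geom_series x hx)]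
  exact (summable_geometric_of_norm_lt_one hx).hasSum

theorem stmt3_general (n : ℕ) (γ : ℝ) (hγ0 : 0 ≤ γ) (hγ1 : γ < 1)
    (P : Matrix (Fin n) (Fin n) ℝ) (hP : RowStochastic P) (r : Fin n → ℝ)
    (j : Fin n) :
    Tendsto (fun L : ℕ => tfTD γ P r j L) atTop (𝓝 (valueV γ P r j)) := by
  have hγP : ‖γ • P‖ < 1 := calc
    ‖γ • P‖ ≤ γ * 1 := by
      rw [norm_smul, Real.norm_of_nonneg hγ0]
      exact mul_le_mul_of_nonneg_left hP.linfty_opNorm_le_one hγ0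
    _ < 1 := by linarith
  have hcont : Continuous fun A : Matrix (Fin n) (Fin n) ℝ => (A *ᵥ r) j :=
    (continuous_apply j).comp (continuous_id.matrix_mulVec continuous_const)
  simpa only [tfTD_eq_sum_pow_mulVec, valueV, Function.comp_def] using
    (hcont.tendsto _).comp (Matrix.hasSum_pow_of_linfty_opNorm_lt_one hγP).tendsto_sum_nat

/-- Theorem 1: inference-time convergence of the depth-L transformer
output with TD parameters to the true value of the query state. -/
theorem stmt3 (n : ℕ) (hn : 1 ≤ n) (γ : ℝ) (hγ0 : 0 ≤ γ) (hγ1 : γ < 1)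
    (P : Matrix (Fin n) (Fin n) ℝ) (hP : RowStochastic P) (r : Fin n → ℝ)
    (j : Fin n) :
    Tendsto (fun L : ℕ => tfTD γ P r j L) atTop (𝓝 (valueV γ P r j)) :=
  stmt3_general n γ hγ0 hγ1 P hP r j

end LinftyOpNorm

end
end

section
/- (Lemma 1) For every L ≥ 0 and every query index ω ∈ {1,…,n}, | r_ω + γ Σ_{j=1}^n P_{ωj} TF_L(Z_0(j); θ_L^TD) − TF_L(Z_0(ω); θ_L^TD) | ≤ ‖r‖_∞ γ^L; that is, the absolute value of the expected TD error of the depth-L Transformer with TD parameters is at most ‖r‖_∞ γ^L. -/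
open Matrix Filter Topology

noncomputable section

/-!
With the TD parameters a layer leaves the feature rows of the prompt untouched and only updates
the reward row: after `l` layers its context part is `(γP)^l r` and its query entry is `-w_l(j)`.
Hence `TF_L(Z_0(j)) = w_L(j)`, the expected TD error at `ω` is `w_{L+1}(ω) - w_L(ω) = ((γP)^L r)_ω`,
and multiplication by a row-stochastic matrix does not increase the sup norm.
-/

open Matrix

namespace RowStochastic

variable {n : ℕ} {P : Matrix (Fin n) (Fin n) ℝ}

theorem norm_mulVec_le (hP : RowStochastic P) (x : Fin n → ℝ) : ‖P *ᵥ x‖ ≤ ‖x‖ := by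
  refine (pi_norm_le_iff_of_nonneg (norm_nonneg x)).2 fun i => ?_
  calc ‖(P *ᵥ x) i‖ = |∑ k, P i k * x k| := rfl
    _ ≤ ∑ k, P i k * ‖x‖ := by
        refine (Finset.abs_sum_le_sum_abs _ _).trans (Finset.sum_le_sum fun k _ => ?_)
        rw [abs_mul, abs_of_nonneg (hP.1 i k)]
        exact mul_le_mul_of_nonneg_left (norm_le_pi_norm x k) (hP.1 i k)
    _ = ‖x‖ := by rw [← Finset.sum_mul, hP.2 i, one_mul]

theorem norm_smul_pow_mulVec_le (hP : RowStochastic P) {γ : ℝ} (hγ : 0 ≤ γ) (x : Fin n → ℝ)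
    (l : ℕ) : ‖(γ • P) ^ l *ᵥ x‖ ≤ γ ^ l * ‖x‖ := by
  induction l with
  | zero => simp
  | succ l ih =>
    rw [pow_succ', ← mulVec_mulVec, smul_mulVec, norm_smul, Real.norm_of_nonneg hγ, pow_succ',
      mul_assoc]
    exact mul_le_mul_of_nonneg_left ((hP.norm_mulVec_le _).trans ih) hγ

end RowStochastic

section AttentionLayer

variable {n : ℕ}

theorem attnLayer_Pmat_zero_apply_inl (Qm : Matrix (RIdx n) (RIdx n) ℝ)
    (Z : Matrix (RIdx n) (CIdx n) ℝ) (p : TwoN n) (q : CIdx n) :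
    attnLayer n (Pmat n 0) Qm Z (Sum.inl p) q = Z (Sum.inl p) q := by
  simp [attnLayer, Matrix.mul_apply, Pmat]

theorem attnLayer_Pmat_zero_apply_inr (Qm : Matrix (RIdx n) (RIdx n) ℝ)
    (Z : Matrix (RIdx n) (CIdx n) ℝ) (q : CIdx n) :
    attnLayer n (Pmat n 0) Qm Z (Sum.inr ()) q =
      Z (Sum.inr ()) q + ∑ i, Z (Sum.inr ()) (Sum.inl i) * (Zᵀ * Qm * Z) (Sum.inl i) q := by
  simp [attnLayer, Matrix.mul_apply, Pmat, maskM, Fintype.sum_sum_type, Matrix.one_apply]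

theorem transpose_mul_Qmat_Atd_mul_apply (Z : Matrix (RIdx n) (CIdx n) ℝ) (c q : CIdx n) :
    (Zᵀ * Qmat n (Atd n) * Z) c q =
      ∑ k, Z (Sum.inl (Sum.inl k)) c *
        (Z (Sum.inl (Sum.inr k)) q - Z (Sum.inl (Sum.inl k)) q) := by
  simp [Matrix.mul_apply, Qmat, Atd, Fintype.sum_sum_type, Matrix.one_apply, sub_eq_neg_add,
    mul_add, Finset.sum_add_distrib]

end AttentionLayer

section TemporalDifference

variable {n : ℕ} (γ : ℝ) (P : Matrix (Fin n) (Fin n) ℝ) (r : Fin n → ℝ)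

theorem tdW_succ_eq_add (l : ℕ) : tdW γ P r (l + 1) = tdW γ P r l + (γ • P) ^ l *ᵥ r := by
  induction l with
  | zero => simp [tdW]
  | succ l ih =>
    conv_lhs => rw [tdW, ih]
    rw [mulVec_add, smul_add, ← add_assoc, pow_succ', ← mulVec_mulVec, smul_mulVec]
    rfl

theorem tdError_eq (l : ℕ) (ω : Fin n) :
    r ω + γ * ∑ j, P ω j * tdW γ P r l j - tdW γ P r l ω = ((γ • P) ^ l *ᵥ r) ω := by
  have h : r ω + γ * ∑ j, P ω j * tdW γ P r l j =
      tdW γ P r l ω + ((γ • P) ^ l *ᵥ r) ω :=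
    congrFun (tdW_succ_eq_add γ P r l) ω
  linarith

def tdEmbedding (j : Fin n) (l : ℕ) : Matrix (RIdx n) (CIdx n) ℝ := fun p q =>
  match p, q with
  | Sum.inl (Sum.inl k), Sum.inl i => if k = i then 1 else 0
  | Sum.inl (Sum.inr k), Sum.inl i => γ * P i k
  | Sum.inr _, Sum.inl i => ((γ • P) ^ l *ᵥ r) i
  | Sum.inl (Sum.inl k), Sum.inr _ => if k = j then 1 else 0
  | Sum.inl (Sum.inr _), Sum.inr _ => 0
  | Sum.inr _, Sum.inr _ => -tdW γ P r l j

theorem tdEmbedding_zero (j : Fin n) : tdEmbedding γ P r j 0 = prompt γ P r j := by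
  ext (p | p) q <;> rcases q with q | u <;> simp [tdEmbedding, prompt, tdW]

theorem attnLayer_tdEmbedding (j : Fin n) (l : ℕ) :
    attnLayer n (Pmat n 0) (Qmat n (Atd n)) (tdEmbedding γ P r j l) =
      tdEmbedding γ P r j (l + 1) := by
  ext (p | u) q
  · rw [attnLayer_Pmat_zero_apply_inl]
    rcases p with p | p <;> rcases q with q | u <;> rfl
  rw [attnLayer_Pmat_zero_apply_inr]
  simp only [transpose_mul_Qmat_Atd_mul_apply]
  rcases q with i | u
  · have hv :
        ((γ • P) ^ (l + 1) *ᵥ r) i = ∑ x, ((γ • P) ^ l *ᵥ r) x * (γ * P i x) := by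
      rw [pow_succ', ← mulVec_mulVec]
      simp only [mulVec, dotProduct, Matrix.smul_apply, smul_eq_mul]
      exact Finset.sum_congr rfl fun x _ => mul_comm _ _
    simp [tdEmbedding, hv, mul_sub]
  · simp [tdEmbedding, tdW_succ_eq_add, add_comm]

theorem embed_Atd_zero_s5 (j : Fin n) (l : ℕ) :
    embed γ P r j (Atd n) 0 l = tdEmbedding γ P r j l := by
  induction l with
  | zero => exact (tdEmbedding_zero γ P r j).symm
  | succ l ih => rw [embed, ih, attnLayer_tdEmbedding]

theorem tfTD_eq_tdW (j : Fin n) (l : ℕ) : tfTD γ P r j l = tdW γ P r l j := by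
  rw [tfTD, tfOut, embed_Atd_zero_s5]
  exact neg_neg _

end TemporalDifference

theorem stmt5_general (n : ℕ) (γ : ℝ) (hγ0 : 0 ≤ γ)
    (P : Matrix (Fin n) (Fin n) ℝ) (hP : RowStochastic P) (r : Fin n → ℝ)
    (L : ℕ) (ω : Fin n) :
    |r ω + γ * (∑ j, P ω j * tfTD γ P r j L) - tfTD γ P r ω L| ≤ ‖r‖ * γ ^ L := by
  simp only [tfTD_eq_tdW]
  rw [tdError_eq]
  calc |((γ • P) ^ L *ᵥ r) ω| ≤ ‖(γ • P) ^ L *ᵥ r‖ := by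
        simpa only [Real.norm_eq_abs] using norm_le_pi_norm ((γ • P) ^ L *ᵥ r) ω
    _ ≤ γ ^ L * ‖r‖ := hP.norm_smul_pow_mulVec_le hγ0 r L
    _ = ‖r‖ * γ ^ L := mul_comm _ _

/-- Lemma 1: the expected TD error of the depth-L transformer with
TD parameters is bounded by `‖r‖_∞ γ^L`. -/
theorem stmt5 (n : ℕ) (hn : 1 ≤ n) (γ : ℝ) (hγ0 : 0 ≤ γ) (hγ1 : γ < 1)
    (P : Matrix (Fin n) (Fin n) ℝ) (hP : RowStochastic P) (r : Fin n → ℝ)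
    (L : ℕ) (ω : Fin n) :
    |r ω + γ * (∑ j, P ω j * tfTD γ P r j L) - tfTD γ P r ω L| ≤ ‖r‖ * γ ^ L :=
  stmt5_general n γ hγ0 P hP r L ω

end
end

section
/- (Lemma 2, part 2) For every l ≥ 0, max_{1≤i≤n} |r_i − (w_l)_i| ≤ (γ + γ^l) ‖v‖_∞; equivalently, the row vector Y_l = (r − w_l)ᵀ of context entries in the bottom row of the embedding evolved under the TD parameters satisfies ‖Y_l‖_1 ≤ (γ + γ^l) ‖v‖_∞, where ‖Y_l‖_1 is the operator norm induced by the ℓ1 vector norm (the maximum absolute column sum, which for a row vector is its maximum absolute entry). -/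
open Matrix Filter Topology

noncomputable section

/-! The Bellman operator `w ↦ r + γ P w` has the value vector `v` as its fixed point, so
`r = v - γ P v` and `v - w_l = (γ P)^l v`. Since a row-stochastic `P` is an `ℓ∞` contraction,
`r - w_l = (γ P)^l v - γ P v` has norm at most `(γ^l + γ) ‖v‖`. -/

section Contraction

variable {m : Type*} [Fintype m] [DecidableEq m] {A : Matrix m m ℝ} {c : ℝ}

theorem Matrix.norm_pow_mulVec_le (hc : 0 ≤ c) (hA : ∀ x, ‖A *ᵥ x‖ ≤ c * ‖x‖) (k : ℕ)
    (x : m → ℝ) : ‖(A ^ k) *ᵥ x‖ ≤ c ^ k * ‖x‖ := by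
  induction k with
  | zero => simp
  | succ k ih =>
    calc ‖(A ^ (k + 1)) *ᵥ x‖ = ‖A *ᵥ ((A ^ k) *ᵥ x)‖ := by rw [pow_succ', ← mulVec_mulVec]
      _ ≤ c * (c ^ k * ‖x‖) := (hA _).trans (mul_le_mul_of_nonneg_left ih hc)
      _ = c ^ (k + 1) * ‖x‖ := by ring

theorem Matrix.isUnit_det_one_sub (hc : c < 1) (hA : ∀ x, ‖A *ᵥ x‖ ≤ c * ‖x‖) :
    IsUnit (1 - A).det := by
  rw [isUnit_iff_ne_zero]
  intro hdet
  obtain ⟨x, hx0, hx⟩ := exists_mulVec_eq_zero_iff.2 hdet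
  have hfix : A *ᵥ x = x := by
    rw [sub_mulVec, one_mulVec, sub_eq_zero] at hx
    exact hx.symm
  have hle : ‖x‖ ≤ c * ‖x‖ := by simpa only [hfix] using hA x
  have hpos : 0 < ‖x‖ := norm_pos_iff.2 hx0
  nlinarith

end Contraction

theorem RowStochastic.norm_mulVec_le_s8 {n : ℕ} {P : Matrix (Fin n) (Fin n) ℝ}
    (hP : RowStochastic P) (x : Fin n → ℝ) : ‖P *ᵥ x‖ ≤ ‖x‖ := by
  refine (pi_norm_le_iff_of_nonneg (norm_nonneg x)).2 fun i => ?_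
  calc ‖(P *ᵥ x) i‖ = |∑ k, P i k * x k| := rfl
    _ ≤ ∑ k, |P i k * x k| := Finset.abs_sum_le_sum_abs _ _
    _ ≤ ∑ k, P i k * ‖x‖ := by
        refine Finset.sum_le_sum fun k _ => ?_
        rw [abs_mul, abs_of_nonneg (hP.1 i k)]
        exact mul_le_mul_of_nonneg_left (norm_le_pi_norm x k) (hP.1 i k)
    _ = ‖x‖ := by rw [← Finset.sum_mul, hP.2 i, one_mul]

theorem RowStochastic.norm_smul_mulVec_le {n : ℕ} {P : Matrix (Fin n) (Fin n) ℝ}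
    (hP : RowStochastic P) {γ : ℝ} (hγ : 0 ≤ γ) (x : Fin n → ℝ) :
    ‖(γ • P) *ᵥ x‖ ≤ γ * ‖x‖ := by
  rw [smul_mulVec, norm_smul, Real.norm_of_nonneg hγ]
  exact mul_le_mul_of_nonneg_left (hP.norm_mulVec_le_s8 x) hγ

section TD

variable {n : ℕ} {γ : ℝ} {P : Matrix (Fin n) (Fin n) ℝ} {r : Fin n → ℝ}

theorem valueV_eq_add (h : IsUnit (1 - γ • P).det) :
    valueV γ P r = r + (γ • P) *ᵥ valueV γ P r := by
  have hsolve : (1 - γ • P) *ᵥ valueV γ P r = r := by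
    rw [valueV, mulVec_mulVec, mul_nonsing_inv _ h, one_mulVec]
  rw [sub_mulVec, one_mulVec] at hsolve
  exact eq_add_of_sub_eq hsolve

theorem sub_tdW_eq_pow_mulVec {v : Fin n → ℝ} (hv : v = r + (γ • P) *ᵥ v) (l : ℕ) :
    v - tdW γ P r l = ((γ • P) ^ l) *ᵥ v := by
  induction l with
  | zero => simp [tdW]
  | succ l ih =>
    calc v - tdW γ P r (l + 1) = (γ • P) *ᵥ (v - tdW γ P r l) := by
          conv_lhs => rw [hv]
          simp only [tdW, mulVec_sub, smul_mulVec]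
          abel
      _ = ((γ • P) ^ (l + 1)) *ᵥ v := by rw [ih, mulVec_mulVec, pow_succ']

end TD

theorem stmt8_general (n : ℕ) (γ : ℝ) (hγ0 : 0 ≤ γ) (hγ1 : γ < 1)
    (P : Matrix (Fin n) (Fin n) ℝ) (hP : RowStochastic P) (r : Fin n → ℝ)
    (l : ℕ) :
    ‖r - tdW γ P r l‖ ≤ (γ + γ ^ l) * ‖valueV γ P r‖ := by
  set v := valueV γ P r
  have hcontr := hP.norm_smul_mulVec_le hγ0
  have hv : v = r + (γ • P) *ᵥ v := valueV_eq_add (Matrix.isUnit_det_one_sub hγ1 hcontr)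
  have herr : r - tdW γ P r l = ((γ • P) ^ l) *ᵥ v - (γ • P) *ᵥ v := by
    have hr : r = v - (γ • P) *ᵥ v := eq_sub_of_add_eq hv.symm
    rw [← sub_tdW_eq_pow_mulVec hv l]
    nth_rewrite 1 [hr]
    abel
  calc ‖r - tdW γ P r l‖ ≤ ‖((γ • P) ^ l) *ᵥ v‖ + ‖(γ • P) *ᵥ v‖ := herr ▸ norm_sub_le _ _
    _ ≤ γ ^ l * ‖v‖ + γ * ‖v‖ :=
        add_le_add (Matrix.norm_pow_mulVec_le hγ0 hcontr l v) (hcontr v)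
    _ = (γ + γ ^ l) * ‖v‖ := by ring

/-- Lemma 2, part 2: `max_i |r_i - (w_l)_i| ≤ (γ + γ^l) ‖v‖_∞`,
i.e. `‖Y_l‖_1 = ‖r - w_l‖_∞ ≤ (γ + γ^l) ‖v‖_∞`. -/
theorem stmt8 (n : ℕ) (hn : 1 ≤ n) (γ : ℝ) (hγ0 : 0 ≤ γ) (hγ1 : γ < 1)
    (P : Matrix (Fin n) (Fin n) ℝ) (hP : RowStochastic P) (r : Fin n → ℝ)
    (l : ℕ) :
    ‖r - tdW γ P r l‖ ≤ (γ + γ ^ l) * ‖valueV γ P r‖ :=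
  stmt8_general n γ hγ0 hγ1 P hP r l

end
end
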